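/- The marginal of the Normal-Inverse-Gamma distribution: if σ² ∼ InverseGamma(α, β) and μ | σ² ∼ N(γ, σ²/v), and y | μ, σ² ∼ N(μ, σ²), then the marginal distribution of y is a Student-t distribution St(y; γ, β(1+v)/(vα), 2α), i.e., its density is p(y) = Γ(α+1/2)/Γ(α) · √(v/(2πβ(1+v))) · (1 + v(y−γ)²/(2β(1+v)))^{−(α+1/2)}. -/

import Mathlib

open MeasureTheory Real Filter Topology

noncomputable def gaussianPdf (m s2 x : ℝ) : ℝ :=
  (Real.sqrt (2 * Real.pi * s2))⁻¹ * Real.exp (-((x - m) ^ 2) / (2 * s2))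

noncomputable def invGammaPdf (a b x : ℝ) : ℝ :=
  b ^ a / Real.Gamma a * x ^ (-a - 1) * Real.exp (-b / x)

noncomputable def studentPdf (γ v a b y : ℝ) : ℝ :=
  Real.Gamma (a + 1 / 2) / Real.Gamma a *
    Real.sqrt (v / (2 * Real.pi * b * (1 + v))) *
    (1 + v * (y - γ) ^ 2 / (2 * b * (1 + v))) ^ (-(a + 1 / 2))

/-!
Integrating out the mean convolves two Gaussians, so `y | σ² ∼ N(γ, σ²(1+v)/v)`. Against the
inverse-gamma density the integrand in `σ²` is then again an unnormalised inverse-gamma density,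
`s^(-(α+1/2)-1) e^(-(β + d)/s)` with `d = v(y-γ)²/(2(1+v))`; its integral
`Γ(α+1/2) (β + d)^(-(α+1/2))` is the Student-t kernel.
-/

lemma integral_gaussianPdf_mul_gaussianPdf {s t : ℝ} (hs : 0 < s) (ht : 0 < t) (m y : ℝ) :
    ∫ μ, gaussianPdf μ s y * gaussianPdf m t μ = gaussianPdf m (s + t) y := by
  set b := (s + t) / (2 * s * t) with hb
  set c := (t * y + s * m) / (s + t) with hc
  have complete_square : ∀ μ : ℝ, -(y - μ) ^ 2 / (2 * s) + -(μ - m) ^ 2 / (2 * t)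
      = -(y - m) ^ 2 / (2 * (s + t)) + -b * (μ - c) ^ 2 := by
    intro μ
    rw [hb, hc]
    field_simp
    ring
  have factor : ∀ μ, gaussianPdf μ s y * gaussianPdf m t μ
      = (√(2 * π * s))⁻¹ * (√(2 * π * t))⁻¹ * exp (-(y - m) ^ 2 / (2 * (s + t)))
        * exp (-b * (μ - c) ^ 2) := by
    intro μ
    rw [gaussianPdf, gaussianPdf, mul_mul_mul_comm, ← exp_add, complete_square, exp_add]
    ring
  have normalise : (√(2 * π * s))⁻¹ * (√(2 * π * t))⁻¹ * √(π / b) = (√(2 * π * (s + t)))⁻¹ := by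
    rw [← sqrt_inv, ← sqrt_inv, ← sqrt_inv, ← sqrt_mul (by positivity),
      ← sqrt_mul (by positivity)]
    congr 1
    rw [hb]
    field_simp
  simp_rw [factor]
  rw [integral_const_mul, integral_sub_right_eq_self (fun μ ↦ exp (-b * μ ^ 2)) c,
    integral_gaussian, gaussianPdf, ← normalise]
  ring

lemma integral_rpow_mul_exp_neg_div_Ioi {a c : ℝ} (ha : 0 < a) (hc : 0 < c) :
    ∫ s in Set.Ioi (0 : ℝ), s ^ (-a - 1) * exp (-c / s) = Gamma a * c ^ (-a) := by
  have substituted := integral_comp_rpow_Ioi (fun x : ℝ ↦ x ^ (a - 1) * exp (-(c * x))) (p := -1)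
    (by norm_num)
  rw [integral_rpow_mul_exp_neg_mul_Ioi ha hc] at substituted
  have integrand : ∀ s ∈ Set.Ioi (0 : ℝ),
      (|(-1 : ℝ)| * s ^ ((-1 : ℝ) - 1)) • ((s ^ (-1 : ℝ)) ^ (a - 1) * exp (-(c * s ^ (-1 : ℝ))))
        = s ^ (-a - 1) * exp (-c / s) := by
    intro s (hs : 0 < s)
    rw [smul_eq_mul, abs_neg, abs_one, one_mul, ← rpow_mul hs.le, ← mul_assoc,
      ← rpow_add hs, rpow_neg_one, neg_div, div_eq_mul_inv]
    ring_nf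
  rw [setIntegral_congr_fun measurableSet_Ioi integrand] at substituted
  rw [substituted, one_div, inv_rpow hc.le, ← rpow_neg hc.le, mul_comm]

lemma gaussianPdf_mul_invGammaPdf {a b c s : ℝ} (hc : 0 < c) (hs : 0 < s) (m y : ℝ) :
    gaussianPdf m (c * s) y * invGammaPdf a b s
      = (√(2 * π * c))⁻¹ * (b ^ a / Gamma a) *
        (s ^ (-(a + 1 / 2) - 1) * exp (-(b + (y - m) ^ 2 / (2 * c)) / s)) := by
  have sqrt_split : (√(2 * π * (c * s)))⁻¹ = (√(2 * π * c))⁻¹ * s ^ (-(1 / 2) : ℝ) := by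
    rw [← mul_assoc, sqrt_mul (by positivity), mul_inv, sqrt_eq_rpow s, ← rpow_neg hs.le]
  have rpow_split : s ^ (-(a + 1 / 2) - 1) = s ^ (-(1 / 2) : ℝ) * s ^ (-a - 1) := by
    rw [← rpow_add hs]
    ring_nf
  have exp_split : exp (-(b + (y - m) ^ 2 / (2 * c)) / s)
      = exp (-(y - m) ^ 2 / (2 * (c * s))) * exp (-b / s) := by
    rw [← exp_add]
    congr 1
    field_simp
    ring
  rw [gaussianPdf, invGammaPdf, sqrt_split, rpow_split, exp_split]
  ring

lemma integral_gaussianPdf_mul_invGammaPdf {a b c : ℝ} (ha : 0 < a) (hb : 0 < b) (hc : 0 < c)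
    (m y : ℝ) :
    ∫ s in Set.Ioi (0 : ℝ), gaussianPdf m (c * s) y * invGammaPdf a b s
      = Gamma (a + 1 / 2) / Gamma a * (√(2 * π * b * c))⁻¹ *
        (1 + (y - m) ^ 2 / (2 * b * c)) ^ (-(a + 1 / 2)) := by
  set d := (y - m) ^ 2 / (2 * c) with hd
  have hbd : 0 < b + d := by positivity
  rw [setIntegral_congr_fun measurableSet_Ioi fun s hs ↦ gaussianPdf_mul_invGammaPdf hc hs m y,
    integral_const_mul, integral_rpow_mul_exp_neg_div_Ioi (by positivity) hbd,
    show 1 + (y - m) ^ 2 / (2 * b * c) = (b + d) / b by rw [hd]; field_simp,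
    div_rpow hbd.le hb.le, show 2 * π * b * c = 2 * π * c * b by ring,
    sqrt_mul (x := 2 * π * c) (by positivity) b]
  have powers : b ^ a = (b ^ (-(a + 1 / 2)) * √b)⁻¹ := by
    rw [sqrt_eq_rpow, ← rpow_add hb, ← rpow_neg hb.le]
    ring_nf
  rw [powers]
  ring

/-- The marginal distribution of `y` in the Normal-Inverse-Gamma hierarchical model is a
Student-t distribution `St(y; γ, β(1+v)/(vα), 2α)`. -/
theorem nig_marginal_is_student (γ v α β : ℝ) (hv : 0 < v) (hα : 0 < α) (hβ : 0 < β)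
    (y : ℝ) :
    (∫ s2 in Set.Ioi (0 : ℝ), ∫ μ : ℝ,
        gaussianPdf μ s2 y * gaussianPdf γ (s2 / v) μ * invGammaPdf α β s2) =
      studentPdf γ v α β y := by
  have marginalize_mean : ∀ s2 ∈ Set.Ioi (0 : ℝ),
      (∫ μ, gaussianPdf μ s2 y * gaussianPdf γ (s2 / v) μ * invGammaPdf α β s2)
        = gaussianPdf γ ((1 + v) / v * s2) y * invGammaPdf α β s2 := by
    intro s2 (hs2 : 0 < s2)
    rw [integral_mul_const, integral_gaussianPdf_mul_gaussianPdf hs2 (div_pos hs2 hv)]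
    congr 2
    field_simp
    ring
  rw [setIntegral_congr_fun measurableSet_Ioi marginalize_mean,
    integral_gaussianPdf_mul_invGammaPdf hα hβ (by positivity), studentPdf, ← sqrt_inv]
  congr 3 <;> field_simp
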